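/- Let 𝒢 be connected, x in the interior of the probability simplex (x_i > 0, Σx_i = 1), and T_x = {σ ∈ ℝⁿ : Σ_i σ_i = 0} the tangent space. Then the bilinear form g_x(σ₁, σ₂) = σ₁ᵀ L(x)⁺ σ₂, with L(x)⁺ the Moore–Penrose pseudoinverse of the weighted Laplacian, is a positive definite inner product on T_x. -/

import Mathlib

open Matrix Finset

/-- The weighted graph Laplacian `L(x)`. -/
noncomputable def lap {n : ℕ} (ω : Matrix (Fin n) (Fin n) ℝ) (d : Fin n → ℝ)
    (x : Fin n → ℝ) : Matrix (Fin n) (Fin n) ℝ :=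
  Matrix.of fun i j =>
    if i = j then (1 / 2) * ∑ k, ω i k * (x i / d i + x k / d k)
    else -(1 / 2) * (ω i j * (x i / d i + x j / d j))

/-- `P` is the Moore–Penrose pseudoinverse of `A` (the four Penrose conditions). -/
def IsMoorePenrose {n : ℕ} (A P : Matrix (Fin n) (Fin n) ℝ) : Prop :=
  A * P * A = A ∧ P * A * P = P ∧ (A * P)ᵀ = A * P ∧ (P * A)ᵀ = P * A

/-! `L(x)` is symmetric, and its quadratic form `¼ ∑ ω_ij θ_ij (u_i - u_j)² + ½ ∑ ω_ii θ_ii u_i²`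
(with `θ_ij = x_i/d_i + x_j/d_j > 0`) is nonnegative and vanishes only on vectors constant along
every edge, so on a connected graph `ker L(x)` consists of constants and every tangent vector is
orthogonal to it. For a symmetric positive semidefinite `A` with pseudoinverse `P` and `σ ⊥ ker A`,
`v = P σ` solves `A v = σ`, hence `σᵀ P σ = vᵀ A v ≥ 0`, with equality only if `A v = σ = 0`.
Symmetry of `P` follows from uniqueness of the pseudoinverse, `Pᵀ` being one as well. -/

namespace IsMoorePenrose

variable {n : ℕ} {A P Q : Matrix (Fin n) (Fin n) ℝ}

theorem unique (hP : IsMoorePenrose A P) (hQ : IsMoorePenrose A Q) : P = Q := by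
  obtain ⟨hP₁, hP₂, hP₃, hP₄⟩ := hP
  obtain ⟨hQ₁, hQ₂, hQ₃, hQ₄⟩ := hQ
  have hAP : A * P = A * Q :=
    calc A * P = (A * Q * (A * P))ᵀ := by rw [← Matrix.mul_assoc, hQ₁, hP₃]
      _ = A * P * (A * Q) := by rw [transpose_mul, hP₃, hQ₃]
      _ = A * Q := by rw [← Matrix.mul_assoc, hP₁]
  have hPA : P * A = Q * A :=
    calc P * A = (P * A * (Q * A))ᵀ := by rw [Matrix.mul_assoc, ← Matrix.mul_assoc A, hQ₁, hP₄]
      _ = Q * A * (P * A) := by rw [transpose_mul, hP₄, hQ₄]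
      _ = Q * A := by rw [Matrix.mul_assoc, ← Matrix.mul_assoc A, hP₁]
  calc P = P * A * P := hP₂.symm
    _ = Q * A * Q := by rw [hPA, Matrix.mul_assoc, hAP, ← Matrix.mul_assoc]
    _ = Q := hQ₂

theorem transpose (hA : A.IsSymm) (h : IsMoorePenrose A P) : IsMoorePenrose A Pᵀ := by
  obtain ⟨h₁, h₂, h₃, h₄⟩ := h
  have hAPt : A * Pᵀ = P * A := by rw [← h₄, transpose_mul, hA.eq]
  have hPtA : Pᵀ * A = A * P := by rw [← h₃, transpose_mul, hA.eq]
  refine ⟨?_, ?_, by rw [hAPt, h₄], by rw [hPtA, h₃]⟩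
  · simpa only [transpose_mul, hA.eq, Matrix.mul_assoc] using congrArg Matrix.transpose h₁
  · simpa only [transpose_mul, hA.eq, Matrix.mul_assoc] using congrArg Matrix.transpose h₂

theorem isSymm (hA : A.IsSymm) (h : IsMoorePenrose A P) : P.IsSymm :=
  (h.transpose hA).unique h

theorem dotProduct_mulVec_comm (hA : A.IsSymm) (h : IsMoorePenrose A P) (σ₁ σ₂ : Fin n → ℝ) :
    σ₁ ⬝ᵥ P *ᵥ σ₂ = σ₂ ⬝ᵥ P *ᵥ σ₁ := by
  rw [dotProduct_mulVec, ← mulVec_transpose, (h.isSymm hA).eq, dotProduct_comm]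

theorem mulVec_mulVec_eq_self (h : IsMoorePenrose A P) {σ : Fin n → ℝ}
    (hσ : ∀ u, A *ᵥ u = 0 → σ ⬝ᵥ u = 0) : P *ᵥ A *ᵥ σ = σ := by
  obtain ⟨h₁, h₂, -, h₄⟩ := h
  set r := σ - P *ᵥ A *ᵥ σ
  have hAr : A *ᵥ r = 0 := by
    simp only [r, mulVec_sub, mulVec_mulVec, ← Matrix.mul_assoc, h₁, sub_self]
  have hPAr : P *ᵥ A *ᵥ r = 0 := by
    simp only [r, mulVec_sub, mulVec_mulVec, ← Matrix.mul_assoc, h₂, sub_self]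
  have hrr : r ⬝ᵥ r = 0 := by
    rw [show r ⬝ᵥ r = σ ⬝ᵥ r - (P *ᵥ A *ᵥ σ) ⬝ᵥ r from sub_dotProduct _ _ _, hσ r hAr,
      mulVec_mulVec, dotProduct_comm, dotProduct_mulVec, ← h₄, vecMul_transpose,
      ← mulVec_mulVec, hPAr, zero_dotProduct, sub_zero]
  exact (sub_eq_zero.mp (dotProduct_self_eq_zero.mp hrr)).symm

theorem dotProduct_mulVec_pos (hA : A.PosSemidef) (h : IsMoorePenrose A P) {σ : Fin n → ℝ}
    (hσ : ∀ u, A *ᵥ u = 0 → σ ⬝ᵥ u = 0) (hσ₀ : σ ≠ 0) : 0 < σ ⬝ᵥ P *ᵥ σ := by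
  have hA' : A.IsSymm := isHermitian_iff_isSymm.mp hA.isHermitian
  have hAP : A * P = P * A := by rw [← h.2.2.2, transpose_mul, hA'.eq, (h.isSymm hA').eq]
  set v := P *ᵥ σ
  have hAv : A *ᵥ v = σ := by
    rw [mulVec_mulVec, hAP, ← mulVec_mulVec, h.mulVec_mulVec_eq_self hσ]
  have hσv : σ ⬝ᵥ v = star v ⬝ᵥ A *ᵥ v := by rw [hAv, star_trivial, dotProduct_comm]
  refine (hσv ▸ hA.dotProduct_mulVec_nonneg v).lt_of_ne fun h0 => hσ₀ ?_
  rw [← hAv, ← hA.dotProduct_mulVec_zero_iff, ← hσv, h0]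

end IsMoorePenrose

theorem sum_sum_mul_sub_sq {ι : Type*} [Fintype ι] {W : Matrix ι ι ℝ} (hW : W.IsSymm)
    (u : ι → ℝ) :
    ∑ i, ∑ j, W i j * (u i - u j) ^ 2 = 2 * (∑ i, (∑ j, W i j) * u i ^ 2 - u ⬝ᵥ W *ᵥ u) := by
  have hswap : ∑ i, ∑ j, W i j * u j ^ 2 = ∑ i, ∑ j, W i j * u i ^ 2 := by
    rw [Finset.sum_comm]
    exact Finset.sum_congr rfl fun i _ => Finset.sum_congr rfl fun j _ => by rw [hW.apply i j]
  have hexpand : ∑ i, ∑ j, W i j * (u i - u j) ^ 2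
      = ∑ i, ∑ j, W i j * u i ^ 2 - 2 * ∑ i, ∑ j, u i * (W i j * u j)
        + ∑ i, ∑ j, W i j * u j ^ 2 := by
    simp only [Finset.mul_sum, ← Finset.sum_sub_distrib, ← Finset.sum_add_distrib]
    exact Finset.sum_congr rfl fun i _ => Finset.sum_congr rfl fun j _ => by ring
  have hrow : ∑ i, (∑ j, W i j) * u i ^ 2 = ∑ i, ∑ j, W i j * u i ^ 2 := by
    simp only [Finset.sum_mul]
  have hdot : u ⬝ᵥ W *ᵥ u = ∑ i, ∑ j, u i * (W i j * u j) := by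
    simp only [dotProduct, mulVec, Finset.mul_sum]
  rw [hexpand, hswap, hrow, hdot]
  ring

section Laplacian

variable {n : ℕ} {ω : Matrix (Fin n) (Fin n) ℝ} {d x : Fin n → ℝ}

variable (ω d x) in
noncomputable def lapWeight : Matrix (Fin n) (Fin n) ℝ :=
  Matrix.of fun i j => ω i j * (x i / d i + x j / d j)

variable (ω d x) in
theorem lap_eq_diagonal_sub :
    lap ω d x = diagonal (fun i => (∑ k, lapWeight ω d x i k + lapWeight ω d x i i) / 2)
      - (1 / 2 : ℝ) • lapWeight ω d x := by
  ext i j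
  by_cases hij : i = j
  · subst hij
    simp only [lap, lapWeight, of_apply, ite_true, Matrix.sub_apply, diagonal_apply_eq,
      Matrix.smul_apply, smul_eq_mul]
    ring
  · simp only [lap, lapWeight, of_apply, if_neg hij, Matrix.sub_apply, diagonal_apply_ne _ hij,
      Matrix.smul_apply, smul_eq_mul]
    ring

theorem isSymm_lapWeight (hsym : ∀ i j, ω i j = ω j i) : (lapWeight ω d x).IsSymm :=
  IsSymm.ext fun i j => by simp only [lapWeight, of_apply, hsym j i, add_comm]

theorem isSymm_lap (hsym : ∀ i j, ω i j = ω j i) : (lap ω d x).IsSymm := by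
  rw [lap_eq_diagonal_sub]
  exact (isSymm_diagonal _).sub ((isSymm_lapWeight hsym).smul _)

theorem lapWeight_nonneg (hnn : ∀ i j, 0 ≤ ω i j) (hd : ∀ i, 0 < d i) (hx : ∀ i, 0 < x i)
    (i j : Fin n) : 0 ≤ lapWeight ω d x i j :=
  mul_nonneg (hnn i j) (add_pos (div_pos (hx i) (hd i)) (div_pos (hx j) (hd j))).le

theorem lapWeight_pos (hd : ∀ i, 0 < d i) (hx : ∀ i, 0 < x i) {i j : Fin n} (hω : 0 < ω i j) :
    0 < lapWeight ω d x i j :=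
  mul_pos hω (add_pos (div_pos (hx i) (hd i)) (div_pos (hx j) (hd j)))

theorem dotProduct_lap_mulVec (hsym : ∀ i j, ω i j = ω j i) (u : Fin n → ℝ) :
    u ⬝ᵥ lap ω d x *ᵥ u = (∑ i, ∑ j, lapWeight ω d x i j * (u i - u j) ^ 2) / 4
      + (∑ i, lapWeight ω d x i i * u i ^ 2) / 2 := by
  rw [sum_sum_mul_sub_sq (isSymm_lapWeight hsym), lap_eq_diagonal_sub, sub_mulVec,
    dotProduct_sub, smul_mulVec, dotProduct_smul]
  set W := lapWeight ω d x
  have hdiag : ∑ i, u i * ((∑ k, W i k + W i i) / 2 * u i)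
      = (∑ i, (∑ k, W i k) * u i ^ 2 + ∑ i, W i i * u i ^ 2) / 2 := by
    rw [← Finset.sum_add_distrib, Finset.sum_div]
    exact Finset.sum_congr rfl fun i _ => by ring
  simp only [dotProduct, mulVec_diagonal, hdiag, smul_eq_mul]
  ring

theorem posSemidef_lap (hsym : ∀ i j, ω i j = ω j i) (hnn : ∀ i j, 0 ≤ ω i j)
    (hd : ∀ i, 0 < d i) (hx : ∀ i, 0 < x i) : (lap ω d x).PosSemidef := by
  refine .of_dotProduct_mulVec_nonneg (isHermitian_iff_isSymm.mpr (isSymm_lap hsym)) fun u => ?_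
  have hW := lapWeight_nonneg hnn hd hx
  rw [star_trivial, dotProduct_lap_mulVec hsym]
  have := Finset.sum_nonneg fun i (_ : i ∈ univ) =>
    Finset.sum_nonneg fun j (_ : j ∈ univ) => mul_nonneg (hW i j) (sq_nonneg (u i - u j))
  have := Finset.sum_nonneg fun i (_ : i ∈ univ) => mul_nonneg (hW i i) (sq_nonneg (u i))
  positivity

theorem lap_mulVec_eq_zero (hsym : ∀ i j, ω i j = ω j i) (hnn : ∀ i j, 0 ≤ ω i j)
    (hd : ∀ i, 0 < d i) (hx : ∀ i, 0 < x i)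
    (hconn : ∀ i j, Relation.ReflTransGen (fun a b => 0 < ω a b) i j) {u : Fin n → ℝ}
    (hu : lap ω d x *ᵥ u = 0) (i j : Fin n) : u i = u j := by
  have hW := lapWeight_nonneg hnn hd hx
  have hterm_nonneg : ∀ a b, 0 ≤ lapWeight ω d x a b * (u a - u b) ^ 2 :=
    fun a b => mul_nonneg (hW a b) (sq_nonneg _)
  have hsum : ∑ a, ∑ b, lapWeight ω d x a b * (u a - u b) ^ 2 = 0 := by
    have hq := dotProduct_lap_mulVec (d := d) (x := x) hsym u
    rw [hu, dotProduct_zero] at hq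
    have := Finset.sum_nonneg fun a (_ : a ∈ univ) =>
      Finset.sum_nonneg fun b (_ : b ∈ univ) => hterm_nonneg a b
    have := Finset.sum_nonneg fun a (_ : a ∈ univ) => mul_nonneg (hW a a) (sq_nonneg (u a))
    linarith
  have hadj : ∀ a b, 0 < ω a b → u a = u b := fun a b hab => by
    have hab' := (Finset.sum_eq_zero_iff_of_nonneg fun b _ => hterm_nonneg a b).mp
      ((Finset.sum_eq_zero_iff_of_nonneg fun a _ => Finset.sum_nonneg fun b _ =>
        hterm_nonneg a b).mp hsum a (mem_univ a)) b (mem_univ b)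
    rw [mul_eq_zero, or_iff_right (lapWeight_pos hd hx hab).ne', sq_eq_zero_iff, sub_eq_zero]
      at hab'
    exact hab'
  induction hconn i j with
  | refl => rfl
  | tail _ hbc ih => exact ih.trans (hadj _ _ hbc)

end Laplacian

theorem dotProduct_eq_zero_of_sum_eq_zero {ι R : Type*} [Fintype ι] [NonUnitalNonAssocSemiring R]
    {σ u : ι → R} (hσ : ∑ i, σ i = 0) (hu : ∀ i j, u i = u j) : σ ⬝ᵥ u = 0 := by
  rcases isEmpty_or_nonempty ι with hι | ⟨⟨i₀⟩⟩
  · simp [dotProduct]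
  · calc σ ⬝ᵥ u = ∑ i, σ i * u i₀ := Finset.sum_congr rfl fun i _ => by rw [hu i i₀]
      _ = 0 := by rw [← Finset.sum_mul, hσ, zero_mul]

theorem wasserstein_metric_posdef_general {n : ℕ} (ω : Matrix (Fin n) (Fin n) ℝ)
    (d : Fin n → ℝ)
    (hsym : ∀ i j, ω i j = ω j i) (hnn : ∀ i j, 0 ≤ ω i j)
    (hd : ∀ i, 0 < d i)
    (hconn : ∀ i j : Fin n, Relation.ReflTransGen (fun a b => 0 < ω a b) i j)
    (x : Fin n → ℝ) (hx : ∀ i, 0 < x i)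
    (Lp : Matrix (Fin n) (Fin n) ℝ) (hLp : IsMoorePenrose (lap ω d x) Lp) :
    (∀ σ₁ σ₂ : Fin n → ℝ, σ₁ ⬝ᵥ Lp.mulVec σ₂ = σ₂ ⬝ᵥ Lp.mulVec σ₁) ∧
    (∀ σ : Fin n → ℝ, (∑ i, σ i) = 0 → σ ≠ 0 → 0 < σ ⬝ᵥ Lp.mulVec σ) := by
  refine ⟨hLp.dotProduct_mulVec_comm (isSymm_lap hsym), fun σ hσ hσ₀ => ?_⟩
  refine hLp.dotProduct_mulVec_pos (posSemidef_lap hsym hnn hd hx) (fun u hu => ?_) hσ₀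
  exact dotProduct_eq_zero_of_sum_eq_zero hσ (lap_mulVec_eq_zero hsym hnn hd hx hconn hu)

/-- Let the graph be connected and `x` be in the interior of the
probability simplex. Then the bilinear form `g_x(σ₁,σ₂) = σ₁ᵀ L(x)⁺ σ₂` is a positive
definite inner product on the tangent space `T_x = {σ : Σσ_i = 0}`: it is symmetric,
bilinear (automatic), and `σᵀ L(x)⁺ σ > 0` for every nonzero tangent vector `σ`. -/
theorem wasserstein_metric_posdef {n : ℕ} (ω : Matrix (Fin n) (Fin n) ℝ)
    (d : Fin n → ℝ)
    (hsym : ∀ i j, ω i j = ω j i) (hnn : ∀ i j, 0 ≤ ω i j)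
    (hloop : ∀ i, ω i i = 0) (hd : ∀ i, 0 < d i)
    (hconn : ∀ i j : Fin n, Relation.ReflTransGen (fun a b => 0 < ω a b) i j)
    (x : Fin n → ℝ) (hx : ∀ i, 0 < x i) (hx1 : ∑ i, x i = 1)
    (Lp : Matrix (Fin n) (Fin n) ℝ) (hLp : IsMoorePenrose (lap ω d x) Lp) :
    (∀ σ₁ σ₂ : Fin n → ℝ, σ₁ ⬝ᵥ Lp.mulVec σ₂ = σ₂ ⬝ᵥ Lp.mulVec σ₁) ∧
    (∀ σ : Fin n → ℝ, (∑ i, σ i) = 0 → σ ≠ 0 → 0 < σ ⬝ᵥ Lp.mulVec σ) :=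
  wasserstein_metric_posdef_general ω d hsym hnn hd hconn x hx Lp hLp
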